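/- Let d ≥ 1, D > 0, R > 0, U > 0, κ > 0, λ > 0. Let g : ℝ → ℝ be convex with derivative μ = g' satisfying μ'(z) ≥ κ on (-D, D) and |μ(z)| ≤ U on [-D, D]. Let θ* ∈ ℝ^d with ‖θ*‖ ≤ D. Let x_1, …, x_t ∈ ℝ^d with ‖x_s‖ ≤ 1 and y_1, …, y_t ∈ ℝ with |y_s| ≤ R. Define Z_1 = λ·I_d, Z_{s+1} = Z_s + (κ/2)·x_s x_sᵀ, θ̂_1 = 0, and θ̂_{s+1} = argmin over ‖θ‖ ≤ D of (1/2)‖θ - θ̂_s‖_{Z_{s+1}}² + θᵀ∇ℓ_s(θ̂_s), where ∇ℓ_s(θ) = (μ(θᵀx_s) - y_s)·x_s. Define a_s = (y_s - μ(θ*ᵀx_s))·x_sᵀ(θ̂_s - θ*) and b_s = (x_sᵀ(θ* - θ̂_s))². Then ‖θ̂_{t+1} - θ*‖_{Z_{t+1}}² ≤ λD² + 2·Σ_{s=1}^t a_s - (κ/2)·Σ_{s=1}^t b_s + (R+U)²·Σ_{s=1}^t x_sᵀZ_{s+1}⁻¹x_s. -/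

import Mathlib

/-!
The online Newton step is a `Z_{s+1}`-projected gradient step, so its first-order optimality
condition on the convex ball, together with `2 vᵀu ≤ ‖u‖²_Z + ‖v‖²_{Z⁻¹}`, gives
`‖θ̂_{s+1} - θ*‖²_{Z_{s+1}} ≤ ‖θ̂_s - θ*‖²_{Z_{s+1}} + 2 ∇ℓ_s(θ̂_s)ᵀ(θ* - θ̂_s)`
`+ ‖∇ℓ_s(θ̂_s)‖²_{Z_{s+1}⁻¹}`.
Since `μ' ≥ κ` on `(-D, D)`, `μ` is `κ`-strongly monotone on `[-D, D]`, which bounds the linear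
term by `2 a_s - 2κ b_s`; the rank-one update costs
`‖θ̂_s - θ*‖²_{Z_{s+1}} - ‖θ̂_s - θ*‖²_{Z_s} = (κ/2) b_s`, and the gradient norm is at most `R + U`.
Summing over `s` telescopes.
-/

open Matrix Set Filter Topology

theorem monotoneOn_sub_const_mul_of_le_deriv {g μ μ' : ℝ → ℝ} {a b κ : ℝ}
    (hg : ∀ z ∈ Icc a b, HasDerivAt g (μ z) z) (hμ : ∀ z ∈ Ioo a b, HasDerivAt μ (μ' z) z)
    (hκ : ∀ z ∈ Ioo a b, κ ≤ μ' z) : MonotoneOn (fun z => μ z - κ * z) (Icc a b) := by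
  set G : ℝ → ℝ := fun z => g z - κ / 2 * z ^ 2
  have hG : ∀ z ∈ Icc a b, HasDerivAt G (μ z - κ * z) z := fun z hz => by
    refine ((hg z hz).fun_sub ((hasDerivAt_pow 2 z).const_mul (κ / 2))).congr_deriv ?_
    norm_num
    ring
  have hderivG : EqOn (deriv G) (fun z => μ z - κ * z) (Icc a b) := fun z hz => (hG z hz).deriv
  have hmono_Ioo : MonotoneOn (fun z => μ z - κ * z) (Ioo a b) := by
    have hμκ : ∀ z ∈ Ioo a b, HasDerivAt (fun z => μ z - κ * z) (μ' z - κ) z := fun z hz => by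
      simpa using (hμ z hz).fun_sub ((hasDerivAt_id' z).const_mul κ)
    refine monotoneOn_of_deriv_nonneg (convex_Ioo a b)
      (fun z hz => (hμκ z hz).continuousAt.continuousWithinAt) ?_ ?_
    · rw [interior_Ioo]
      exact fun z hz => (hμκ z hz).differentiableAt.differentiableWithinAt
    · rw [interior_Ioo]
      exact fun z hz => (hμκ z hz).deriv ▸ sub_nonneg.2 (hκ z hz)
  -- `G` is convex on the closed interval, so `G' = μ - κ·id` stays monotone at the endpoints,
  -- where nothing is assumed about `μ'`.
  have hGconv : ConvexOn ℝ (Icc a b) G := by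
    refine MonotoneOn.convexOn_of_deriv (convex_Icc a b)
      (fun z hz => (hG z hz).continuousAt.continuousWithinAt) ?_ ?_
    · rw [interior_Icc]
      exact fun z hz => (hG z (Ioo_subset_Icc_self hz)).differentiableAt.differentiableWithinAt
    · rw [interior_Icc]
      exact hmono_Ioo.congr (hderivG.mono Ioo_subset_Icc_self).symm
  exact (hGconv.monotoneOn_deriv fun z hz => (hG z hz).differentiableAt).congr hderivG

theorem const_mul_sq_le_of_le_deriv {g μ μ' : ℝ → ℝ} {a b κ u v : ℝ}
    (hg : ∀ z ∈ Icc a b, HasDerivAt g (μ z) z) (hμ : ∀ z ∈ Ioo a b, HasDerivAt μ (μ' z) z)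
    (hκ : ∀ z ∈ Ioo a b, κ ≤ μ' z) (hu : u ∈ Icc a b) (hv : v ∈ Icc a b) :
    κ * (u - v) ^ 2 ≤ (μ u - μ v) * (u - v) := by
  have hmono := monotoneOn_sub_const_mul_of_le_deriv hg hμ hκ
  rcases le_total v u with hvu | huv
  · have := hmono hv hu hvu
    nlinarith
  · have := hmono hu hv huv
    nlinarith

theorem nonneg_of_forall_mem_Ioc_nonneg_add_mul {L q : ℝ}
    (h : ∀ τ ∈ Ioc (0 : ℝ) 1, 0 ≤ L + τ * q) : 0 ≤ L := by
  have hlim : Tendsto (fun τ : ℝ => L + τ * q) (𝓝[>] 0) (𝓝 L) := by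
    have : Continuous fun τ : ℝ => L + τ * q := by fun_prop
    simpa using (this.tendsto 0).mono_left nhdsWithin_le_nhds
  exact ge_of_tendsto hlim (eventually_of_mem (Ioc_mem_nhdsGT one_pos) h)

theorem le_add_sum_Icc_of_succ_le {f δ : ℕ → ℝ} {t : ℕ}
    (h : ∀ s ∈ Finset.Icc 1 t, f (s + 1) ≤ f s + δ s) :
    f (t + 1) ≤ f 1 + ∑ s ∈ Finset.Icc 1 t, δ s := by
  induction t with
  | zero => simp
  | succ t ih =>
    have hlast := h (t + 1) (by simp)
    have hprev := ih fun s hs => h s (Finset.Icc_subset_Icc_right t.le_succ hs)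
    rw [Finset.sum_Icc_succ_top (by omega)]
    linarith

theorem abs_dotProduct_le_sqrt_mul_sqrt {n : Type*} [Fintype n] (u v : n → ℝ) :
    |u ⬝ᵥ v| ≤ √(∑ j, u j ^ 2) * √(∑ j, v j ^ 2) := by
  refine abs_le.2 ⟨?_, Real.sum_mul_le_sqrt_mul_sqrt _ _ _⟩
  have := Real.sum_mul_le_sqrt_mul_sqrt Finset.univ (-u) v
  simp only [Pi.neg_apply, neg_mul, Finset.sum_neg_distrib, even_two, Even.neg_pow] at this
  simp only [dotProduct]
  linarith

theorem convex_setOf_sqrt_sum_sq_le {n : Type*} [Fintype n] (D : ℝ) :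
    Convex ℝ {θ : n → ℝ | √(∑ j, θ j ^ 2) ≤ D} := by
  have : {θ : n → ℝ | √(∑ j, θ j ^ 2) ≤ D} =
      (WithLp.linearEquiv 2 ℝ (n → ℝ)).symm ⁻¹' Metric.closedBall 0 D := by
    ext θ
    simp [EuclideanSpace.norm_eq]
  rw [this]
  exact (convex_closedBall 0 D).linear_preimage _

namespace Matrix

variable {n : Type*} [Fintype n] {Z : Matrix n n ℝ}

theorem IsHermitian.dotProduct_mulVec_comm (hZ : Z.IsHermitian) (u w : n → ℝ) :
    u ⬝ᵥ (Z *ᵥ w) = w ⬝ᵥ (Z *ᵥ u) := by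
  rw [dotProduct_mulVec, ← mulVec_transpose, (isHermitian_iff_isSymm.1 hZ).eq, dotProduct_comm]

theorem PosSemidef.dotProduct_mulVec_self_nonneg (hZ : Z.PosSemidef) (u : n → ℝ) :
    0 ≤ u ⬝ᵥ (Z *ᵥ u) := by
  simpa using hZ.dotProduct_mulVec_nonneg u

theorem dotProduct_add_smul_vecMulVec_mulVec (c : ℝ) (x u : n → ℝ) :
    u ⬝ᵥ ((Z + c • vecMulVec x x) *ᵥ u) = u ⬝ᵥ (Z *ᵥ u) + c * (x ⬝ᵥ u) ^ 2 := by
  rw [add_mulVec, smul_mulVec, vecMulVec_mulVec, dotProduct_add, dotProduct_smul,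
    dotProduct_smul]
  simp only [MulOpposite.smul_eq_mul_unop, MulOpposite.unop_op, smul_eq_mul, dotProduct_comm u x]
  ring

theorem PosDef.add_smul_vecMulVec (hZ : Z.PosDef) {c : ℝ} (hc : 0 ≤ c) (x : n → ℝ) :
    (Z + c • vecMulVec x x).PosDef :=
  hZ.add_posSemidef (by simpa using (posSemidef_vecMulVec_self_star x).smul hc)

theorem PosDef.succ_of_eq_add_smul_vecMulVec {A : ℕ → Matrix n n ℝ} {x : ℕ → n → ℝ} {c : ℝ}
    {t : ℕ} (hA₁ : (A 1).PosDef) (hc : 0 ≤ c)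
    (hA : ∀ s ∈ Finset.Icc 1 t, A (s + 1) = A s + c • vecMulVec (x s) (x s)) :
    ∀ s ∈ Finset.Icc 1 t, (A (s + 1)).PosDef := by
  intro s hs
  obtain ⟨h1s, hst⟩ := Finset.mem_Icc.1 hs
  induction s, h1s using Nat.le_induction with
  | base => exact hA 1 hs ▸ hA₁.add_smul_vecMulVec hc _
  | succ s h1s ih =>
    have hprev := ih (Finset.mem_Icc.2 ⟨h1s, by omega⟩) (by omega)
    exact hA (s + 1) hs ▸ hprev.add_smul_vecMulVec hc _

theorem IsHermitian.dotProduct_mulVec_add_smul_self (hZ : Z.IsHermitian) (e w : n → ℝ) (τ : ℝ) :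
    (e + τ • w) ⬝ᵥ (Z *ᵥ (e + τ • w)) =
      e ⬝ᵥ (Z *ᵥ e) + 2 * τ * (e ⬝ᵥ (Z *ᵥ w)) + τ ^ 2 * (w ⬝ᵥ (Z *ᵥ w)) := by
  simp only [mulVec_add, mulVec_smul, dotProduct_add, add_dotProduct, dotProduct_smul,
    smul_dotProduct, smul_eq_mul, hZ.dotProduct_mulVec_comm w e]
  ring

theorem IsHermitian.variational_inequality_of_isMinOn (hZ : Z.IsHermitian) {K : Set (n → ℝ)}
    (hK : Convex ℝ K) {θ₀ θ₁ θ v : n → ℝ} (hθ₁ : θ₁ ∈ K) (hθ : θ ∈ K)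
    (hmin : IsMinOn (fun θ' => 1 / 2 * ((θ' - θ₀) ⬝ᵥ (Z *ᵥ (θ' - θ₀))) + θ' ⬝ᵥ v) K θ₁) :
    0 ≤ (θ₁ - θ₀) ⬝ᵥ (Z *ᵥ (θ - θ₁)) + v ⬝ᵥ (θ - θ₁) := by
  refine nonneg_of_forall_mem_Ioc_nonneg_add_mul (q := (θ - θ₁) ⬝ᵥ (Z *ᵥ (θ - θ₁)) / 2)
    fun τ hτ => ?_
  have hle := isMinOn_iff.1 hmin _ (hK.add_smul_sub_mem hθ₁ hθ (Ioc_subset_Icc_self hτ))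
  rw [show θ₁ + τ • (θ - θ₁) - θ₀ = (θ₁ - θ₀) + τ • (θ - θ₁) by abel,
    hZ.dotProduct_mulVec_add_smul_self, add_dotProduct, smul_dotProduct, smul_eq_mul,
    dotProduct_comm (θ - θ₁) v] at hle
  have : 0 ≤ τ * ((θ₁ - θ₀) ⬝ᵥ (Z *ᵥ (θ - θ₁)) + v ⬝ᵥ (θ - θ₁) +
      τ * ((θ - θ₁) ⬝ᵥ (Z *ᵥ (θ - θ₁)) / 2)) := by
    linarith
  exact nonneg_of_mul_nonneg_right (by linarith) hτ.1

variable [DecidableEq n]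

theorem PosDef.two_mul_dotProduct_le (hZ : Z.PosDef) (u v : n → ℝ) :
    2 * (v ⬝ᵥ u) ≤ u ⬝ᵥ (Z *ᵥ u) + v ⬝ᵥ (Z⁻¹ *ᵥ v) := by
  have hZZinv : Z *ᵥ (Z⁻¹ *ᵥ v) = v := by
    rw [mulVec_mulVec, mul_nonsing_inv _ ((isUnit_iff_isUnit_det Z).1 hZ.isUnit), one_mulVec]
  have := hZ.posSemidef.dotProduct_mulVec_self_nonneg (u - Z⁻¹ *ᵥ v)
  rw [mulVec_sub, hZZinv, dotProduct_sub, sub_dotProduct, sub_dotProduct,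
    hZ.isHermitian.dotProduct_mulVec_comm (Z⁻¹ *ᵥ v) u, hZZinv, dotProduct_comm (Z⁻¹ *ᵥ v) v,
    dotProduct_comm u v] at this
  linarith

theorem PosDef.onlineNewtonStep_le (hZ : Z.PosDef) {K : Set (n → ℝ)}
    (hK : Convex ℝ K) {θ₀ θ₁ θ v : n → ℝ} (hθ₁ : θ₁ ∈ K) (hθ : θ ∈ K)
    (hmin : IsMinOn (fun θ' => 1 / 2 * ((θ' - θ₀) ⬝ᵥ (Z *ᵥ (θ' - θ₀))) + θ' ⬝ᵥ v) K θ₁) :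
    (θ₁ - θ) ⬝ᵥ (Z *ᵥ (θ₁ - θ)) ≤
      (θ₀ - θ) ⬝ᵥ (Z *ᵥ (θ₀ - θ)) + 2 * (v ⬝ᵥ (θ - θ₀)) + v ⬝ᵥ (Z⁻¹ *ᵥ v) := by
  have hvi := hZ.isHermitian.variational_inequality_of_isMinOn hK hθ₁ hθ hmin
  have hsq := hZ.two_mul_dotProduct_le (θ₀ - θ₁) v
  have hcomm := hZ.isHermitian.dotProduct_mulVec_comm
  simp only [mulVec_sub, dotProduct_sub, sub_dotProduct] at hvi hsq ⊢
  linarith [hcomm θ₀ θ₁, hcomm θ₀ θ, hcomm θ₁ θ]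

end Matrix

theorem glm_onlineNewtonStep_le {n : Type*} [Fintype n] [DecidableEq n]
    {Z Z' : Matrix n n ℝ} {K : Set (n → ℝ)} {μ : ℝ → ℝ} {x θ θ₁ θ' : n → ℝ} {y κ G : ℝ}
    (hκ : 0 ≤ κ) (hZ' : Z'.PosDef) (hZ'eq : Z' = Z + (κ / 2) • vecMulVec x x)
    (hK : Convex ℝ K) (hθ₁ : θ₁ ∈ K) (hθ' : θ' ∈ K)
    (hmin : IsMinOn (fun ϑ => 1 / 2 * ((ϑ - θ) ⬝ᵥ (Z' *ᵥ (ϑ - θ))) +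
      ϑ ⬝ᵥ ((μ (θ ⬝ᵥ x) - y) • x)) K θ₁)
    (hstrong : κ * (θ ⬝ᵥ x - θ' ⬝ᵥ x) ^ 2 ≤
      (μ (θ ⬝ᵥ x) - μ (θ' ⬝ᵥ x)) * (θ ⬝ᵥ x - θ' ⬝ᵥ x))
    (hG : |μ (θ ⬝ᵥ x) - y| ≤ G) :
    (θ₁ - θ') ⬝ᵥ (Z' *ᵥ (θ₁ - θ')) ≤
      (θ - θ') ⬝ᵥ (Z *ᵥ (θ - θ')) + (2 * ((y - μ (θ' ⬝ᵥ x)) * (x ⬝ᵥ (θ - θ'))) -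
        κ / 2 * (x ⬝ᵥ (θ' - θ)) ^ 2 + G ^ 2 * (x ⬝ᵥ (Z'⁻¹ *ᵥ x))) := by
  have hons := hZ'.onlineNewtonStep_le hK hθ₁ hθ' hmin
  have hgrowth : (θ - θ') ⬝ᵥ (Z' *ᵥ (θ - θ')) =
      (θ - θ') ⬝ᵥ (Z *ᵥ (θ - θ')) + κ / 2 * (x ⬝ᵥ (θ - θ')) ^ 2 := by
    rw [hZ'eq, dotProduct_add_smul_vecMulVec_mulVec]
  have hgrad : (μ (θ ⬝ᵥ x) - y) ^ 2 ≤ G ^ 2 := sq_le_sq' (abs_le.1 hG).1 (abs_le.1 hG).2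
  have hinv : 0 ≤ x ⬝ᵥ (Z'⁻¹ *ᵥ x) := hZ'.inv.posSemidef.dotProduct_mulVec_self_nonneg x
  simp only [mulVec_smul, smul_dotProduct, dotProduct_smul, smul_eq_mul] at hons
  simp only [dotProduct_sub, dotProduct_comm x θ, dotProduct_comm x θ'] at hons hgrowth ⊢
  nlinarith [mul_le_mul_of_nonneg_right hgrad hinv, sq_nonneg (θ ⬝ᵥ x - θ' ⬝ᵥ x)]

theorem confidence_recursion_bound_general
    (d : ℕ)
    (D R U κ lam : ℝ) (hκ : 0 < κ)
    (hlam : 0 < lam)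
    (g μ μ' : ℝ → ℝ)
    (hg_deriv : ∀ z : ℝ, HasDerivAt g (μ z) z)
    (hμ_deriv : ∀ z ∈ Set.Ioo (-D) D, HasDerivAt μ (μ' z) z)
    (hμ'_ge : ∀ z ∈ Set.Ioo (-D) D, κ ≤ μ' z)
    (hμ_bdd : ∀ z ∈ Set.Icc (-D) D, |μ z| ≤ U)
    (θstar : Fin d → ℝ) (hθstar : Real.sqrt (∑ j, θstar j ^ 2) ≤ D)
    (t : ℕ) (x : ℕ → Fin d → ℝ) (y : ℕ → ℝ)
    (hx : ∀ s ∈ Finset.Icc 1 t, Real.sqrt (∑ j, x s j ^ 2) ≤ 1)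
    (hy : ∀ s ∈ Finset.Icc 1 t, |y s| ≤ R)
    (Z : ℕ → Matrix (Fin d) (Fin d) ℝ)
    (hZ1 : Z 1 = lam • (1 : Matrix (Fin d) (Fin d) ℝ))
    (hZrec : ∀ s ∈ Finset.Icc 1 t, Z (s + 1) = Z s + (κ / 2) • vecMulVec (x s) (x s))
    (θhat : ℕ → Fin d → ℝ)
    (hθhat1 : θhat 1 = 0)
    (hθhat_rec : ∀ s ∈ Finset.Icc 1 t,
      Real.sqrt (∑ j, θhat (s + 1) j ^ 2) ≤ D ∧
      ∀ θ' : Fin d → ℝ, Real.sqrt (∑ j, θ' j ^ 2) ≤ D →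
        1 / 2 * ((θhat (s + 1) - θhat s) ⬝ᵥ (Z (s + 1) *ᵥ (θhat (s + 1) - θhat s))) +
          θhat (s + 1) ⬝ᵥ ((μ (θhat s ⬝ᵥ x s) - y s) • x s) ≤
        1 / 2 * ((θ' - θhat s) ⬝ᵥ (Z (s + 1) *ᵥ (θ' - θhat s))) +
          θ' ⬝ᵥ ((μ (θhat s ⬝ᵥ x s) - y s) • x s)) :
    (θhat (t + 1) - θstar) ⬝ᵥ (Z (t + 1) *ᵥ (θhat (t + 1) - θstar)) ≤
      lam * D ^ 2 +
        2 * ∑ s ∈ Finset.Icc 1 t, (y s - μ (θstar ⬝ᵥ x s)) * (x s ⬝ᵥ (θhat s - θstar)) -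
        κ / 2 * ∑ s ∈ Finset.Icc 1 t, (x s ⬝ᵥ (θstar - θhat s)) ^ 2 +
        (R + U) ^ 2 * ∑ s ∈ Finset.Icc 1 t, x s ⬝ᵥ ((Z (s + 1))⁻¹ *ᵥ x s) := by
  set K : Set (Fin d → ℝ) := {θ | √(∑ j, θ j ^ 2) ≤ D}
  have hK : Convex ℝ K := convex_setOf_sqrt_sum_sq_le D
  obtain ⟨hD, hθstar_sq⟩ := Real.sqrt_le_iff.1 hθstar
  have hθhat_mem : ∀ s ∈ Finset.Icc 1 t, θhat s ∈ K := by
    rintro (_ | _ | s) hs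
    · simp at hs
    · simpa [K, hθhat1] using hD
    · exact (hθhat_rec (s + 1) (by simp at hs ⊢; omega)).1
  have hdot_mem : ∀ θ ∈ K, ∀ s ∈ Finset.Icc 1 t, θ ⬝ᵥ x s ∈ Icc (-D) D := fun θ hθ s hs =>
    abs_le.1 <| (abs_dotProduct_le_sqrt_mul_sqrt _ _).trans <|
      (mul_le_mul hθ (hx s hs) (Real.sqrt_nonneg _) hD).trans_eq (mul_one D)
  have hZ_pos : ∀ s ∈ Finset.Icc 1 t, (Z (s + 1)).PosDef :=
    PosDef.succ_of_eq_add_smul_vecMulVec (hZ1 ▸ PosDef.one.smul hlam) (by positivity) hZrec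
  have hstep : ∀ s ∈ Finset.Icc 1 t, _ := fun s hs => by
    have hθhat_dot := hdot_mem _ (hθhat_mem s hs) s hs
    have hgrad : |μ (θhat s ⬝ᵥ x s) - y s| ≤ R + U :=
      (abs_sub _ _).trans (by linarith [hμ_bdd _ hθhat_dot, hy s hs])
    exact glm_onlineNewtonStep_le hκ.le (hZ_pos s hs) (hZrec s hs) hK (hθhat_rec s hs).1 hθstar
      (isMinOn_iff.2 (hθhat_rec s hs).2)
      (const_mul_sq_le_of_le_deriv (fun z _ => hg_deriv z) hμ_deriv hμ'_ge hθhat_dot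
        (hdot_mem _ hθstar s hs)) hgrad
  have hstart : (θhat 1 - θstar) ⬝ᵥ (Z 1 *ᵥ (θhat 1 - θstar)) ≤ lam * D ^ 2 := by
    rw [hθhat1, hZ1, smul_mulVec, one_mulVec, dotProduct_smul, smul_eq_mul, zero_sub,
      neg_dotProduct, dotProduct_neg, neg_neg]
    simpa [dotProduct, ← sq] using mul_le_mul_of_nonneg_left hθstar_sq hlam.le
  have htotal := le_add_sum_Icc_of_succ_le
    (f := fun s => (θhat s - θstar) ⬝ᵥ (Z s *ᵥ (θhat s - θstar))) hstep
  simp only [Finset.sum_add_distrib, Finset.sum_sub_distrib, ← Finset.mul_sum] at htotal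
  linarith

/-- deterministic recursion underlying Theorem 1.
Combining the strong-convexity lemma, the expected-loss minimality of `θ*`, and the
online Newton step inequality yields
`‖θ̂_{t+1} - θ*‖²_{Z_{t+1}} ≤ λD² + 2Σa_s - (κ/2)Σb_s + (R+U)²·Σ xᵀZ⁻¹x`. -/
theorem confidence_recursion_bound
    (d : ℕ) (hd : 1 ≤ d)
    (D R U κ lam : ℝ) (hD : 0 < D) (hR : 0 < R) (hU : 0 < U) (hκ : 0 < κ)
    (hlam : 0 < lam)
    (g μ μ' : ℝ → ℝ)
    (hg_conv : ConvexOn ℝ Set.univ g)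
    (hg_deriv : ∀ z : ℝ, HasDerivAt g (μ z) z)
    (hμ_deriv : ∀ z ∈ Set.Ioo (-D) D, HasDerivAt μ (μ' z) z)
    (hμ'_ge : ∀ z ∈ Set.Ioo (-D) D, κ ≤ μ' z)
    (hμ_bdd : ∀ z ∈ Set.Icc (-D) D, |μ z| ≤ U)
    (θstar : Fin d → ℝ) (hθstar : Real.sqrt (∑ j, θstar j ^ 2) ≤ D)
    (t : ℕ) (x : ℕ → Fin d → ℝ) (y : ℕ → ℝ)
    (hx : ∀ s ∈ Finset.Icc 1 t, Real.sqrt (∑ j, x s j ^ 2) ≤ 1)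
    (hy : ∀ s ∈ Finset.Icc 1 t, |y s| ≤ R)
    (Z : ℕ → Matrix (Fin d) (Fin d) ℝ)
    (hZ1 : Z 1 = lam • (1 : Matrix (Fin d) (Fin d) ℝ))
    (hZrec : ∀ s ∈ Finset.Icc 1 t, Z (s + 1) = Z s + (κ / 2) • vecMulVec (x s) (x s))
    (θhat : ℕ → Fin d → ℝ)
    (hθhat1 : θhat 1 = 0)
    (hθhat_rec : ∀ s ∈ Finset.Icc 1 t,
      Real.sqrt (∑ j, θhat (s + 1) j ^ 2) ≤ D ∧
      ∀ θ' : Fin d → ℝ, Real.sqrt (∑ j, θ' j ^ 2) ≤ D →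
        1 / 2 * ((θhat (s + 1) - θhat s) ⬝ᵥ (Z (s + 1) *ᵥ (θhat (s + 1) - θhat s))) +
          θhat (s + 1) ⬝ᵥ ((μ (θhat s ⬝ᵥ x s) - y s) • x s) ≤
        1 / 2 * ((θ' - θhat s) ⬝ᵥ (Z (s + 1) *ᵥ (θ' - θhat s))) +
          θ' ⬝ᵥ ((μ (θhat s ⬝ᵥ x s) - y s) • x s)) :
    (θhat (t + 1) - θstar) ⬝ᵥ (Z (t + 1) *ᵥ (θhat (t + 1) - θstar)) ≤
      lam * D ^ 2 +
        2 * ∑ s ∈ Finset.Icc 1 t, (y s - μ (θstar ⬝ᵥ x s)) * (x s ⬝ᵥ (θhat s - θstar)) -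
        κ / 2 * ∑ s ∈ Finset.Icc 1 t, (x s ⬝ᵥ (θstar - θhat s)) ^ 2 +
        (R + U) ^ 2 * ∑ s ∈ Finset.Icc 1 t, x s ⬝ᵥ ((Z (s + 1))⁻¹ *ᵥ x s) :=
  confidence_recursion_bound_general d D R U κ lam hκ hlam g μ μ' hg_deriv hμ_deriv hμ'_ge hμ_bdd
    θstar hθstar t x y hx hy Z hZ1 hZrec θhat hθhat1 hθhat_rec
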